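/- Let A be an n×n real symmetric positive semidefinite matrix, B an n×n real symmetric positive definite matrix, let y ∈ ℝⁿ be nonzero with y_i = 0 for some index i, and define R̃(α) = R(y + α e_i), q₁₂ = A_{ii}(By)_i − B_{ii}(Ay)_i, q₁₃ = A_{ii}(yᵀBy) − B_{ii}(yᵀAy), and q₂₃ = (Ay)_i(yᵀBy) − (By)_i(yᵀAy). If q₁₂ ≠ 0, then α⁻ := (−q₁₃ − √(q₁₃² − 4·q₁₂·q₂₃)) / (2·q₁₂) is a global maximizer of R̃ over ℝ: R̃(α) ≤ R̃(α⁻) for every α ∈ ℝ. -/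

import Mathlib

/-!
Along the line `x = y + α eᵢ` (for symmetric `A`, `B`) the Rayleigh quotient is `N(α) / D(α)` with
`N(α) = s + 2αp + α²a`, `D(α) = t + 2αq + α²b`, where `a = Aᵢᵢ`, `p = (Ay)ᵢ`, `s = yᵀAy` and
`b`, `q`, `t` are the same for `B`; `D > 0` since `y` is not a multiple of `eᵢ`. For all `α, β`,
`N(α)D(β) − N(β)D(α) = (α−β)²(2q₁₂β + q₁₃) + 2(α−β)(q₁₂β² + q₁₃β + q₂₃)`.
`α⁻` is a root of `q₁₂β² + q₁₃β + q₂₃` with `2q₁₂α⁻ + q₁₃ = −√disc ≤ 0`, so the right side is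
`≤ 0` at `β = α⁻`. The discriminant is nonnegative because `t²` times it has the form
`u² + (tb − q²)v²`, and `q² ≤ tb` because `D > 0` everywhere.
-/

open Matrix

section QuadraticRatio

variable {a b p q s t : ℝ}

lemma sq_le_mul_of_forall_quadratic_pos (hD : ∀ x, 0 < t + 2 * x * q + x ^ 2 * b) :
    q ^ 2 ≤ t * b := by
  have h := discrim_le_zero (a := b) (b := 2 * q) (c := t) fun x => by
    nlinarith [hD x]
  rw [discrim] at h
  nlinarith

lemma quadratic_ratio_discrim_nonneg (hD : ∀ x, 0 < t + 2 * x * q + x ^ 2 * b) :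
    0 ≤ (a * t - b * s) ^ 2 - 4 * (a * q - b * p) * (p * t - q * s) := by
  have ht : 0 < t := by simpa using hD 0
  have hqt : 0 ≤ t * b - q ^ 2 := sub_nonneg.2 (sq_le_mul_of_forall_quadratic_pos hD)
  have hsos : ((a * t - b * s) ^ 2 - 4 * (a * q - b * p) * (p * t - q * s)) * t ^ 2 =
      (t * (b * s - t * a) - 2 * q * (q * s - p * t)) ^ 2 +
        (t * b - q ^ 2) * (2 * (q * s - p * t)) ^ 2 := by ring
  have : 0 ≤ ((a * t - b * s) ^ 2 - 4 * (a * q - b * p) * (p * t - q * s)) * t ^ 2 := by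
    rw [hsos]
    positivity
  exact nonneg_of_mul_nonneg_left this (by positivity)

theorem quadratic_ratio_le_at_smaller_root (hD : ∀ x, 0 < t + 2 * x * q + x ^ 2 * b)
    (h12 : a * q - b * p ≠ 0) (x : ℝ) :
    let q12 := a * q - b * p
    let q13 := a * t - b * s
    let q23 := p * t - q * s
    let β := (-q13 - √(q13 ^ 2 - 4 * q12 * q23)) / (2 * q12)
    (s + 2 * x * p + x ^ 2 * a) / (t + 2 * x * q + x ^ 2 * b) ≤
      (s + 2 * β * p + β ^ 2 * a) / (t + 2 * β * q + β ^ 2 * b) := by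
  intro q12 q13 q23 β
  set r := √(q13 ^ 2 - 4 * q12 * q23)
  have hr0 : 0 ≤ r := Real.sqrt_nonneg _
  have hr2 : r ^ 2 = q13 ^ 2 - 4 * q12 * q23 := Real.sq_sqrt (quadratic_ratio_discrim_nonneg hD)
  have hβ : 2 * q12 * β + q13 = -r := by
    rw [show 2 * q12 * β = -q13 - r from mul_div_cancel₀ _ (by simpa using h12)]
    ring
  have hroot : q12 * β ^ 2 + q13 * β + q23 = 0 := by
    have : (4 * q12) * (q12 * β ^ 2 + q13 * β + q23) = 0 := by
      linear_combination (2 * q12 * β + q13 - r) * hβ + hr2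
    exact (mul_eq_zero.1 this).resolve_left (by simpa using h12)
  have hcross : (s + 2 * x * p + x ^ 2 * a) * (t + 2 * β * q + β ^ 2 * b) -
      (s + 2 * β * p + β ^ 2 * a) * (t + 2 * x * q + x ^ 2 * b) =
      (x - β) ^ 2 * (2 * q12 * β + q13) + 2 * (x - β) * (q12 * β ^ 2 + q13 * β + q23) := by
    ring
  rw [hβ, hroot] at hcross
  rw [div_le_div_iff₀ (hD x) (hD β)]
  nlinarith [mul_nonneg (sq_nonneg (x - β)) hr0]

end QuadraticRatio

lemma dotProduct_mulVec_add_smul_single {ι R : Type*} [Fintype ι] [DecidableEq ι] [CommRing R]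
    {M : Matrix ι ι R} (hM : M.IsSymm) (y : ι → R)
    (i : ι) (c : R) :
    (y + c • Pi.single i 1) ⬝ᵥ M *ᵥ (y + c • Pi.single i 1) =
      y ⬝ᵥ M *ᵥ y + 2 * c * (M *ᵥ y) i + c ^ 2 * M i i := by
  have hleft : Pi.single i 1 ⬝ᵥ M *ᵥ y = (M *ᵥ y) i := by simp [single_dotProduct]
  have hright : y ⬝ᵥ M *ᵥ Pi.single i 1 = (M *ᵥ y) i := by
    rw [dotProduct_mulVec, ← mulVec_transpose, hM.eq]
    simp [dotProduct_single]
  have hdiag : Pi.single i 1 ⬝ᵥ M *ᵥ Pi.single i 1 = M i i := by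
    simp [mulVec_single, single_dotProduct]
  simp only [mulVec_add, mulVec_smul, add_dotProduct, dotProduct_add, smul_dotProduct,
    dotProduct_smul, smul_eq_mul, hleft, hright, hdiag]
  ring

lemma add_smul_single_ne_zero {ι R : Type*} [DecidableEq ι] [Semiring R] {y : ι → R}
    (hy : y ≠ 0) {i : ι} (hyi : y i = 0) (c : R) :
    y + c • Pi.single i 1 ≠ 0 := by
  obtain ⟨j, hj⟩ := Function.ne_iff.1 hy
  have hji : j ≠ i := by rintro rfl; exact hj hyi
  intro h
  exact hj (by simpa [hji] using congrFun h j)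

/-- If `q₁₂ ≠ 0`, then `α⁻ = (−q₁₃ − √(q₁₃² − 4 q₁₂ q₂₃))/(2 q₁₂)` is a global maximizer
of `R̃(α) = R(y + α e_i)` over ℝ. -/
theorem rayleigh_max_at_alpha_minus {n : ℕ} (A B : Matrix (Fin n) (Fin n) ℝ)
    (hA : A.PosSemidef) (hB : B.PosDef) (y : Fin n → ℝ) (hy : y ≠ 0)
    (i : Fin n) (hyi : y i = 0)
    (hq12 : A i i * B.mulVec y i - B i i * A.mulVec y i ≠ 0) :
    ∀ α : ℝ,
      ((y + α • (Pi.single i 1 : Fin n → ℝ)) ⬝ᵥ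
          A.mulVec (y + α • (Pi.single i 1 : Fin n → ℝ))) /
        ((y + α • (Pi.single i 1 : Fin n → ℝ)) ⬝ᵥ
          B.mulVec (y + α • (Pi.single i 1 : Fin n → ℝ)))
      ≤ (letI q12 := A i i * B.mulVec y i - B i i * A.mulVec y i
         letI q13 := A i i * (y ⬝ᵥ B.mulVec y) - B i i * (y ⬝ᵥ A.mulVec y)
         letI q23 := A.mulVec y i * (y ⬝ᵥ B.mulVec y) - B.mulVec y i * (y ⬝ᵥ A.mulVec y)
         letI αm := (-q13 - Real.sqrt (q13 ^ 2 - 4 * q12 * q23)) / (2 * q12)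
         ((y + αm • (Pi.single i 1 : Fin n → ℝ)) ⬝ᵥ
             A.mulVec (y + αm • (Pi.single i 1 : Fin n → ℝ))) /
           ((y + αm • (Pi.single i 1 : Fin n → ℝ)) ⬝ᵥ
             B.mulVec (y + αm • (Pi.single i 1 : Fin n → ℝ)))) := by
  have hAsymm : A.IsSymm := isHermitian_iff_isSymm.1 hA.isHermitian
  have hBsymm : B.IsSymm := isHermitian_iff_isSymm.1 hB.isHermitian
  have hden : ∀ x : ℝ, 0 < y ⬝ᵥ B *ᵥ y + 2 * x * (B *ᵥ y) i + x ^ 2 * B i i := fun x => by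
    rw [← dotProduct_mulVec_add_smul_single hBsymm]
    exact hB.dotProduct_mulVec_pos (add_smul_single_ne_zero hy hyi x)
  intro α
  simp only [dotProduct_mulVec_add_smul_single hAsymm, dotProduct_mulVec_add_smul_single hBsymm]
  exact quadratic_ratio_le_at_smaller_root hden hq12 α
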